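/- For a vector η in a Hilbert C*-module H, the following are equivalent: (1) θ_{η,η} is a projection (i.e., idempotent and self-adjoint); (2) ⟨η,η⟩ is a projection in A; (3) η = η⟨η,η⟩. -/

import Mathlib

/-!
Write `p = ⟨η, η⟩`; it is self-adjoint, and `θ_{η,η}` is always symmetric. Since
`θ_{η,η} ∘ θ_{η,η} = θ_{η p, η}`, condition (3) makes `θ_{η,η}` idempotent, while idempotence of
`θ_{η,η}`, tested at `η` and paired with `η`, gives `p³ = p²`; then `p² - p` is a self-adjoint
element of square zero, hence zero by the C*-identity. Finally, if `p` is a projection then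
`η p - η` is orthogonal to `η`, hence to itself, which is (3); conversely (3) gives
`p = ⟨η, η p⟩ = p²`.
-/

open scoped RightActions

/-- The December 2024 Mathlib `CStarModule` (right `A`-module, `⟪x, y <• a⟫ = ⟪x, y⟫ * a`). -/
class CStarModuleOld (A E : Type*) [NonUnitalSemiring A] [StarRing A] [Module ℂ A]
    [AddCommGroup E] [Module ℂ E] [PartialOrder A] [SMul Aᵐᵒᵖ E] [Norm A] [Norm E]
    extends Inner A E where
  inner_add_right {x} {y} {z} : inner x (y + z) = inner x y + inner x z
  inner_self_nonneg {x} : 0 ≤ inner x x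
  inner_self {x} : inner x x = 0 ↔ x = 0
  inner_op_smul_right {a : A} {x y : E} : inner x (y <• a) = inner x y * a
  inner_smul_right_complex {z : ℂ} {x} {y} : inner x (z • y) = z • inner x y
  star_inner x y : star (inner x y) = inner y x
  norm_eq_sqrt_norm_inner_self x : ‖x‖ = √‖inner x x‖

variable {A E : Type*} [NonUnitalCStarAlgebra A] [PartialOrder A] [StarOrderedRing A]
  [AddCommGroup E] [Module ℂ E] [SMul Aᵐᵒᵖ E] [Norm E] [CStarModuleOld A E]

/-- The rank-one operator `θ_{ξ,η} : ζ ↦ ξ⟨η,ζ⟩` on a Hilbert C*-module. -/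
def rankOne (ξ η : E) : E → E := fun ζ => ξ <• (inner (𝕜 := A) η ζ)

theorem IsSelfAdjoint.isIdempotentElem_of_mul_self_mul_self {R : Type*} [NonUnitalNormedRing R]
    [StarRing R] [CStarRing R] {a : R} (ha : IsSelfAdjoint a) (h : a * a * a = a * a) :
    IsIdempotentElem a := by
  have hsq : star (a * a - a) * (a * a - a) = 0 := by
    calc star (a * a - a) * (a * a - a) = a * (a * a * a) - a * a * a - (a * a * a - a * a) := by
          rw [star_sub, star_mul, ha.star_eq]; noncomm_ring
      _ = 0 := by rw [h, ← mul_assoc, h, sub_self]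
  exact sub_eq_zero.mp (CStarRing.star_mul_self_eq_zero_iff _ |>.mp hsq)

namespace CStarModuleOld

section

variable {A E : Type*} [NonUnitalRing A] [StarRing A] [Module ℂ A] [PartialOrder A] [Norm A]
  [AddCommGroup E] [Module ℂ E] [SMul Aᵐᵒᵖ E] [Norm E] [CStarModuleOld A E]

theorem inner_sub_right {x y z : E} :
    inner (𝕜 := A) x (y - z) = inner (𝕜 := A) x y - inner (𝕜 := A) x z :=
  eq_sub_of_add_eq (by rw [← inner_add_right, sub_add_cancel])

theorem inner_sub_left {x y z : E} :
    inner (𝕜 := A) (x - y) z = inner (𝕜 := A) x z - inner (𝕜 := A) y z := by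
  rw [← star_inner z, inner_sub_right, star_sub, star_inner, star_inner]

theorem inner_op_smul_left {a : A} {x y : E} :
    inner (𝕜 := A) (x <• a) y = star a * inner (𝕜 := A) x y := by
  rw [← star_inner y, inner_op_smul_right, star_mul, star_inner]

theorem isSelfAdjoint_inner_self (x : E) : IsSelfAdjoint (inner (𝕜 := A) x x) :=
  star_inner x x

theorem ext_inner_left {x y : E} (h : ∀ z : E, inner (𝕜 := A) z x = inner (𝕜 := A) z y) :
    x = y := by
  rw [← sub_eq_zero, ← inner_self (A := A), inner_sub_right, h, sub_self]

theorem op_smul_op_smul (x : E) (a b : A) : x <• a <• b = x <• (a * b) :=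
  ext_inner_left (A := A) fun z => by simp only [inner_op_smul_right, mul_assoc]

theorem isIdempotentElem_inner_self_iff {x : E} :
    IsIdempotentElem (inner (𝕜 := A) x x) ↔ x <• inner (𝕜 := A) x x = x := by
  set p := inner (𝕜 := A) x x
  constructor
  · intro hp
    have horth : inner (𝕜 := A) (x <• p - x) x = 0 := by
      rw [inner_sub_left, inner_op_smul_left, (isSelfAdjoint_inner_self x).star_eq, hp.eq,
        sub_self]
    rw [← sub_eq_zero, ← inner_self (A := A), inner_sub_right, inner_op_smul_right, horth,
      zero_mul, sub_zero]
  · intro hx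
    calc p * p = inner (𝕜 := A) x (x <• p) := inner_op_smul_right.symm
      _ = p := by rw [hx]

end

end CStarModuleOld

open CStarModuleOld

section

variable {A E : Type*} [NonUnitalCStarAlgebra A] [PartialOrder A] [AddCommGroup E] [Module ℂ E]
  [SMul Aᵐᵒᵖ E] [Norm E] [CStarModuleOld A E]

theorem inner_rankOne_left (ξ η x y : E) :
    inner (𝕜 := A) (rankOne (A := A) ξ η x) y = inner (𝕜 := A) x (rankOne (A := A) η ξ y) := by
  simp only [rankOne, inner_op_smul_left, inner_op_smul_right, star_inner]

theorem rankOne_comp_rankOne (ξ η ξ' η' : E) :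
    rankOne (A := A) ξ η ∘ rankOne (A := A) ξ' η' =
      rankOne (A := A) (ξ <• inner (𝕜 := A) η ξ') η' := by
  funext ζ
  simp only [Function.comp, rankOne, inner_op_smul_right, CStarModuleOld.op_smul_op_smul]

theorem rankOne_self_comp_self_eq_iff (η : E) :
    rankOne (A := A) η η ∘ rankOne (A := A) η η = rankOne (A := A) η η ↔
      IsIdempotentElem (inner (𝕜 := A) η η) := by
  rw [rankOne_comp_rankOne]
  constructor
  · intro h
    have hcube := congrArg (inner (𝕜 := A) η) (congrFun h η)
    simp only [rankOne, inner_op_smul_right] at hcube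
    exact (isSelfAdjoint_inner_self η).isIdempotentElem_of_mul_self_mul_self hcube
  · intro hp
    rw [isIdempotentElem_inner_self_iff.mp hp]

end

/-- The following are equivalent: (1) `θ_{η,η}` is a projection (idempotent and self-adjoint);
(2) `⟨η,η⟩` is a projection in `A`; (3) `η = η⟨η,η⟩`. -/
theorem rankOne_isProjection_iff (η : E) :
    (((rankOne (A := A) η η) ∘ (rankOne (A := A) η η) = rankOne (A := A) η η ∧
        ∀ x y : E, inner (𝕜 := A) (rankOne (A := A) η η x) y
          = inner (𝕜 := A) x (rankOne (A := A) η η y))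
      ↔ (IsIdempotentElem (inner (𝕜 := A) η η) ∧ IsSelfAdjoint (inner (𝕜 := A) η η)))
    ∧ ((IsIdempotentElem (inner (𝕜 := A) η η) ∧ IsSelfAdjoint (inner (𝕜 := A) η η))
      ↔ η = η <• (inner (𝕜 := A) η η)) := by
  rw [and_iff_left (isSelfAdjoint_inner_self η), and_iff_left (inner_rankOne_left η η), rankOne_self_comp_self_eq_iff]
  exact ⟨Iff.rfl, isIdempotentElem_inner_self_iff.trans eq_comm⟩
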